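/- Let μ be a Radon measure over ℝⁿ, a ∈ ℝⁿ, r₀ ∈ (0,∞), and A ∈ [1,∞). Suppose A^{-1} ω_m r^m ≤ μ(B̄(a,r)) for all r ∈ (0, r₀], and μ(B̄(z,r)) ≤ A ω_m r^m for all z ∈ ℝⁿ and r ∈ (0, r₀]. Then there exist δ = δ(A,m) ∈ (0,1] and σ = σ(A,n,m) ∈ (0,1] such that for all r ∈ (0, r₀]: μ^m(X_δ(a,r)) ≥ σ μ(B̄(a,r))^m, where X_δ(a,r) = { (b₁,…,b_m) ∈ B̄(a,r)^m : |(b₁−a) ∧ ⋯ ∧ (b_m−a)| ≥ δ r^m } and μ^m is the m-fold product measure. -/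

import Mathlib

open MeasureTheory Metric Filter Topology
open scoped ENNReal

noncomputable section

/-- Norm of the wedge product `v₁ ∧ ⋯ ∧ v_m` (square root of the Gram determinant). -/
def wedgeNorm {n m : ℕ} (v : Fin m → EuclideanSpace ℝ (Fin n)) : ℝ :=
  Real.sqrt ((Matrix.of fun i j => (inner ℝ (v i) (v j) : ℝ)).det)

/-- `ω_m`, the Lebesgue measure of the unit ball in `ℝ^m`. -/
def omegaBall (m : ℕ) : ℝ := (volume (Metric.ball (0 : EuclideanSpace ℝ (Fin m)) 1)).toReal

/-- `X_δ(a,r)`: the set of `m`-tuples in `B̄(a,r)` spanning with `a` a fat simplex. -/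
def Xfat {n : ℕ} (m : ℕ) (δ : ℝ) (a : EuclideanSpace ℝ (Fin n)) (r : ℝ) :
    Set (Fin m → EuclideanSpace ℝ (Fin n)) :=
  {p | (∀ i, p i ∈ closedBall a r) ∧ δ * r ^ m ≤ wedgeNorm (fun i => p i - a)}

instance (m : ℕ) : WellFoundedLT (Fin m) := inferInstance

open InnerProductSpace

variable {H : Type*} [NormedAddCommGroup H] [InnerProductSpace ℝ H]

lemma gram_det_eq {m : ℕ} (v : Fin m → H) :
    (Matrix.of fun i j => (inner ℝ (v i) (v j) : ℝ)).det
      = ∏ i, ‖gramSchmidt ℝ v i‖ ^ 2 := by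
  classical
  set u := gramSchmidt ℝ v with hu
  set L : Matrix (Fin m) (Fin m) ℝ := Matrix.of fun i j =>
    if i < j then (inner ℝ (u i) (v j) : ℝ) / ‖u i‖ ^ 2
      else if i = j then 1 else 0 with hL
  have hLdiag : ∀ i, L i i = 1 := by intro i; simp [hL]
  have hLlt : ∀ i j : Fin m, i < j → L i j = (inner ℝ (u i) (v j) : ℝ) / ‖u i‖ ^ 2 := by
    intro i j h; simp [hL, h]
  have hLgt : ∀ i j : Fin m, j < i → L i j = 0 := by
    intro i j h; simp [hL, not_lt_of_gt h, (ne_of_gt h)]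
  have hv : ∀ j, v j = ∑ i, L i j • u i := by
    intro j
    have h := gramSchmidt_def'' ℝ v j
    have hsplit : (Finset.univ : Finset (Fin m)) = insert j (Finset.Iio j ∪ Finset.Ioi j) := by
      ext i
      simp only [Finset.mem_univ, Finset.mem_insert, Finset.mem_union, Finset.mem_Iio,
        Finset.mem_Ioi, true_iff]
      rcases lt_trichotomy i j with h' | h' | h' <;> simp [h']
    rw [hsplit, Finset.sum_insert (by simp), Finset.sum_union (by
      simp [Finset.disjoint_left]; intro x hx; exact le_of_lt hx)]
    have h1 : ∑ i ∈ Finset.Ioi j, L i j • u i = 0 := by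
      apply Finset.sum_eq_zero; intro i hi
      rw [hLgt i j (Finset.mem_Ioi.mp hi)]; simp
    have h2 : ∑ i ∈ Finset.Iio j, L i j • u i
        = ∑ i ∈ Finset.Iio j, ((inner ℝ (u i) (v j) : ℝ) / ‖u i‖ ^ 2) • u i := by
      apply Finset.sum_congr rfl; intro i hi
      rw [hLlt i j (Finset.mem_Iio.mp hi)]
    rw [h1, h2, add_zero, hLdiag, one_smul]
    exact h
  have horth : ∀ i j : Fin m, i ≠ j → (inner ℝ (u i) (u j) : ℝ) = 0 :=
    fun i j hij => gramSchmidt_orthogonal ℝ v hij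
  have hG : (Matrix.of fun i j => (inner ℝ (v i) (v j) : ℝ))
      = L.transpose * Matrix.diagonal (fun i => ‖u i‖ ^ 2) * L := by
    ext i j
    simp only [Matrix.mul_apply, Matrix.diagonal_apply, Matrix.transpose_apply, Matrix.of_apply]
    have : (inner ℝ (v i) (v j) : ℝ) = ∑ k, ∑ l, (L k i * L l j) * (inner ℝ (u k) (u l) : ℝ) := by
      rw [hv i, hv j, sum_inner]
      apply Finset.sum_congr rfl; intro k _
      rw [inner_sum]
      apply Finset.sum_congr rfl; intro l _
      rw [real_inner_smul_left, real_inner_smul_right]; ring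
    rw [this]
    apply Finset.sum_congr rfl; intro k _
    rw [Finset.sum_eq_single k (fun l _ hl => by rw [horth k l (Ne.symm hl)]; ring) (by simp)]
    rw [real_inner_self_eq_norm_sq]
    simp [Matrix.diagonal_apply]
    ring
  rw [hG, Matrix.det_mul, Matrix.det_mul, Matrix.det_transpose, Matrix.det_diagonal]
  have hLtri : L.BlockTriangular id := by
    intro i j hij; exact hLgt i j hij
  rw [Matrix.det_of_upperTriangular hLtri]
  simp [hLdiag]

lemma norm_gramSchmidt_ge {m : ℕ} (v : Fin m → H) {t : ℝ} (k : Fin m)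
    (h : ∀ p ∈ Submodule.span ℝ (v '' Set.Iio k), t ≤ ‖v k - p‖) :
    t ≤ ‖gramSchmidt ℝ v k‖ := by
  classical
  set u := gramSchmidt ℝ v with hu
  have hp : v k - u k ∈ Submodule.span ℝ (v '' Set.Iio k) := by
    have : v k - u k = ∑ i ∈ Finset.Iio k,
        ((ℝ ∙ u i).starProjection (v k) : H) := by
      rw [hu, gramSchmidt_def ℝ v k]; abel
    rw [this]
    apply Submodule.sum_mem
    intro i hi
    have hik : i < k := Finset.mem_Iio.mp hi
    have h1 : (ℝ ∙ u i) ≤ Submodule.span ℝ (v '' Set.Iio k) := by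
      rw [Submodule.span_singleton_le_iff_mem]
      have h2 : u i ∈ Submodule.span ℝ (v '' Set.Iic i) :=
        gramSchmidt_mem_span ℝ v le_rfl
      exact Submodule.span_mono
        (Set.image_mono (fun x hx => lt_of_le_of_lt hx hik)) h2
    exact h1 (Submodule.coe_mem _)
  have := h _ hp
  simpa using this

lemma card_le_pack {d : ℕ} (T : Finset (EuclideanSpace ℝ (Fin d))) {ρ R : ℝ}
    (hρ : 0 < ρ) (hR : 0 ≤ R) (hT : ∀ x ∈ T, ‖x‖ ≤ R)
    (hsep : ∀ x ∈ T, ∀ y ∈ T, x ≠ y → 2 * ρ ≤ dist x y) :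
    (T.card : ℝ) * ρ ^ d ≤ (R + ρ) ^ d := by
  classical
  have hdisj : (↑T : Set (EuclideanSpace ℝ (Fin d))).PairwiseDisjoint (fun x => ball x ρ) := by
    intro x hx y hy hxy
    exact ball_disjoint_ball (by linarith [hsep x (Finset.mem_coe.mp hx) y (Finset.mem_coe.mp hy) hxy])
  have hmeas : volume (⋃ x ∈ T, ball x ρ) = ∑ x ∈ T, volume (ball x ρ) :=
    measure_biUnion_finset hdisj (fun x _ => measurableSet_ball)
  have hsub : (⋃ x ∈ T, ball x ρ) ⊆ ball (0 : EuclideanSpace ℝ (Fin d)) (R + ρ) := by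
    intro z hz
    simp only [Set.mem_iUnion] at hz
    obtain ⟨x, hx, hzx⟩ := hz
    rw [mem_ball] at hzx ⊢
    calc dist z 0 ≤ dist z x + dist x 0 := dist_triangle _ _ _
      _ < ρ + R := by
          have h1 := hT x hx
          rw [dist_zero_right]
          linarith
      _ = R + ρ := by ring
  have hvol : ∀ x : EuclideanSpace ℝ (Fin d), volume (ball x ρ) = ENNReal.ofReal (ρ ^ d) * volume (ball (0 : EuclideanSpace ℝ (Fin d)) 1) := by
    intro x
    rw [Measure.addHaar_ball_of_pos volume x hρ, finrank_euclideanSpace_fin]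
  have hvol2 : volume (ball (0 : EuclideanSpace ℝ (Fin d)) (R + ρ)) =
      ENNReal.ofReal ((R + ρ) ^ d) * volume (ball (0 : EuclideanSpace ℝ (Fin d)) 1) := by
    rw [Measure.addHaar_ball_of_pos volume _ (by linarith), finrank_euclideanSpace_fin]
  have hkey : (T.card : ℝ≥0∞) * (ENNReal.ofReal (ρ ^ d) * volume (ball (0 : EuclideanSpace ℝ (Fin d)) 1))
      ≤ ENNReal.ofReal ((R + ρ) ^ d) * volume (ball (0 : EuclideanSpace ℝ (Fin d)) 1) := by
    calc (T.card : ℝ≥0∞) * (ENNReal.ofReal (ρ ^ d) * volume (ball (0 : EuclideanSpace ℝ (Fin d)) 1))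
        = ∑ x ∈ T, volume (ball x ρ) := by
          rw [Finset.sum_congr rfl (fun x _ => hvol x), Finset.sum_const, nsmul_eq_mul]
      _ = volume (⋃ x ∈ T, ball x ρ) := hmeas.symm
      _ ≤ volume (ball (0 : EuclideanSpace ℝ (Fin d)) (R + ρ)) := measure_mono hsub
      _ = _ := hvol2
  have hc0 : volume (ball (0 : EuclideanSpace ℝ (Fin d)) 1) ≠ 0 :=
    (measure_ball_pos volume _ one_pos).ne'
  have hctop : volume (ball (0 : EuclideanSpace ℝ (Fin d)) 1) ≠ ⊤ := measure_ball_lt_top.ne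
  rw [← mul_assoc] at hkey
  have hkey2 : (T.card : ℝ≥0∞) * ENNReal.ofReal (ρ ^ d) ≤ ENNReal.ofReal ((R + ρ) ^ d) :=
    (ENNReal.mul_le_mul_iff_left hc0 hctop).mp hkey
  have : ENNReal.ofReal ((T.card : ℝ) * ρ ^ d) ≤ ENNReal.ofReal ((R + ρ) ^ d) := by
    rwa [ENNReal.ofReal_mul (by positivity), ENNReal.ofReal_natCast]
  exact (ENNReal.ofReal_le_ofReal_iff (by positivity)).mp this

lemma slab_bound {n : ℕ} (μ : Measure (EuclideanSpace ℝ (Fin n))) {A ω r₀ : ℝ} (mm m' : ℕ)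
    (hub : ∀ z r, 0 < r → r ≤ r₀ → μ (closedBall z r) ≤ ENNReal.ofReal (A * ω * r ^ mm))
    {ε r : ℝ} (hε : 0 < ε) (hε6 : 6 * ε ≤ 1) (hr : 0 < r) (hrr₀ : r ≤ r₀)
    (a : EuclideanSpace ℝ (Fin n)) (V : Submodule ℝ (EuclideanSpace ℝ (Fin n)))
    (hV : Module.finrank ℝ V ≤ m') :
    μ {x | x ∈ closedBall a r ∧ ∃ p ∈ V, ‖x - a - p‖ < ε * r}
      ≤ ENNReal.ofReal ((2 / ε) ^ m' * (A * ω * (6 * ε * r) ^ mm)) := by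
  classical
  set S : Set (EuclideanSpace ℝ (Fin n)) :=
    {x | x ∈ closedBall a r ∧ ∃ p ∈ V, ‖x - a - p‖ < ε * r} with hS
  have hε1 : ε ≤ 1 := by linarith
  set d := Module.finrank ℝ V with hd
  set iso := (stdOrthonormalBasis ℝ V).repr with hiso
  -- choice of a nearby point in V
  set q : EuclideanSpace ℝ (Fin n) → EuclideanSpace ℝ (Fin n) := fun x =>
    if h : ∃ p, p ∈ V ∧ ‖x - a - p‖ < ε * r then Classical.choose h else 0 with hq
  have hqV : ∀ x, q x ∈ V := by
    intro x
    simp only [hq]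
    by_cases h : ∃ p ∈ V, ‖x - a - p‖ < ε * r
    · simp only [dif_pos h]
      exact (Classical.choose_spec h).1
    · simp only [dif_neg h]
      exact V.zero_mem
  have hqS : ∀ x ∈ S, ‖x - a - q x‖ < ε * r := by
    intro x hx
    obtain ⟨-, p, hpV, hpx⟩ := hx
    have h : ∃ p, p ∈ V ∧ ‖x - a - p‖ < ε * r := ⟨p, hpV, hpx⟩
    simp only [hq, dif_pos h]
    exact (Classical.choose_spec h).2
  set g : EuclideanSpace ℝ (Fin n) → EuclideanSpace ℝ (Fin d) :=
    fun x => iso ⟨q x, hqV x⟩ with hg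
  have hgdist : ∀ x y, dist (g x) (g y) = dist (q x) (q y) := by
    intro x y
    rw [hg]
    rw [iso.dist_map]
    exact Subtype.dist_eq _ _
  have hgnorm : ∀ x, ‖g x‖ = ‖q x‖ := by
    intro x
    rw [hg, iso.norm_map]
    rfl
  -- cardinality bound for separated subsets of S
  have key : ∀ T : Finset (EuclideanSpace ℝ (Fin n)), (↑T ⊆ S) →
      (∀ x ∈ T, ∀ y ∈ T, x ≠ y → 6 * ε * r ≤ dist x y) →
      (T.card : ℝ) ≤ (2 / ε) ^ m' := by
    intro T hTS hTsep
    have hsepq : ∀ x ∈ T, ∀ y ∈ T, x ≠ y → 4 * (ε * r) ≤ dist (q x) (q y) := by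
      intro x hx y hy hxy
      have h1 := hqS x (hTS hx)
      have h2 := hqS y (hTS hy)
      have h3 := hTsep x hx y hy hxy
      have : dist x y ≤ ‖x - a - q x‖ + dist (q x) (q y) + ‖y - a - q y‖ := by
        have : x - y = (x - a - q x) + (q x - q y) - (y - a - q y) := by abel
        rw [dist_eq_norm, this, dist_eq_norm]
        calc ‖(x - a - q x) + (q x - q y) - (y - a - q y)‖
            ≤ ‖(x - a - q x) + (q x - q y)‖ + ‖y - a - q y‖ := norm_sub_le _ _
          _ ≤ ‖x - a - q x‖ + ‖q x - q y‖ + ‖y - a - q y‖ := by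
              gcongr; exact norm_add_le _ _
      linarith
    have hinj : Set.InjOn g ↑T := by
      intro x hx y hy hxy
      by_contra hne
      have := hsepq x (Finset.mem_coe.mp hx) y (Finset.mem_coe.mp hy) hne
      rw [← hgdist, hxy, dist_self] at this
      nlinarith
    have hcard : (T.image g).card = T.card := Finset.card_image_of_injOn hinj
    have hnorm : ∀ z ∈ T.image g, ‖z‖ ≤ 2 * r := by
      intro z hz
      obtain ⟨x, hx, rfl⟩ := Finset.mem_image.mp hz
      have h1 := hqS x (hTS hx)
      have h2 : ‖x - a‖ ≤ r := by
        have := (hTS hx).1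
        rwa [mem_closedBall, dist_eq_norm] at this
      rw [hgnorm]
      have h3 : ‖q x‖ ≤ ‖x - a‖ + ‖x - a - q x‖ := by
        calc ‖q x‖ = ‖(x - a) - (x - a - q x)‖ := by congr 1; abel
          _ ≤ ‖x - a‖ + ‖x - a - q x‖ := norm_sub_le _ _
      nlinarith
    have hsep' : ∀ z ∈ T.image g, ∀ w ∈ T.image g, z ≠ w →
        2 * (2 * (ε * r)) ≤ dist z w := by
      intro z hz w hw hzw
      obtain ⟨x, hx, rfl⟩ := Finset.mem_image.mp hz
      obtain ⟨y, hy, rfl⟩ := Finset.mem_image.mp hw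
      have hxy : x ≠ y := fun h => hzw (by rw [h])
      rw [hgdist]
      have := hsepq x hx y hy hxy
      linarith
    have hpack := card_le_pack (T.image g) (by positivity : (0:ℝ) < 2 * (ε * r))
      (by positivity : (0:ℝ) ≤ 2 * r) hnorm hsep'
    rw [hcard] at hpack
    -- (card) * (2εr)^d ≤ (2r + 2εr)^d ≤ (2/ε)^d (2εr)^d
    have hbound : (2 * r + 2 * (ε * r)) ^ d ≤ ((2 / ε) ^ d) * (2 * (ε * r)) ^ d := by
      rw [← mul_pow]
      apply pow_le_pow_left₀ (by positivity)
      rw [div_mul_eq_mul_div, mul_comm]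
      rw [le_div_iff₀ hε]
      nlinarith [mul_nonneg (mul_nonneg (sub_nonneg.mpr hε1) hε.le) hr.le]
    have h4 : (T.card : ℝ) * (2 * (ε * r)) ^ d ≤ ((2 / ε) ^ d) * (2 * (ε * r)) ^ d :=
      le_trans hpack hbound
    have h5 : (T.card : ℝ) ≤ (2 / ε) ^ d :=
      le_of_mul_le_mul_right h4 (by positivity)
    calc (T.card : ℝ) ≤ (2 / ε) ^ d := h5
      _ ≤ (2 / ε) ^ m' := by
          apply pow_le_pow_right₀ ?_ hV
          rw [le_div_iff₀ hε]
          linarith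
  -- a maximal separated finset
  set P : Finset (EuclideanSpace ℝ (Fin n)) → Prop := fun T => (↑T ⊆ S) ∧
      (∀ x ∈ T, ∀ y ∈ T, x ≠ y → 6 * ε * r ≤ dist x y) with hP
  set cards : Set ℕ := {k | ∃ T, P T ∧ T.card = k} with hcards
  have hne : cards.Nonempty := ⟨0, ∅, ⟨by simp, by simp⟩, rfl⟩
  have hbdd : BddAbove cards := by
    refine ⟨⌊(2 / ε : ℝ) ^ m'⌋₊, ?_⟩
    rintro k ⟨T, hT, rfl⟩
    exact Nat.le_floor (key T hT.1 hT.2)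
  obtain ⟨T₀, hT₀, hcard₀⟩ : ∃ T, P T ∧ T.card = sSup cards := Nat.sSup_mem hne hbdd
  -- coverage
  have hcover : S ⊆ ⋃ t ∈ T₀, closedBall t (6 * ε * r) := by
    intro x hx
    by_contra hnc
    simp only [Set.mem_iUnion, mem_closedBall, not_exists, not_le] at hnc
    have hxT : x ∉ T₀ := by
      intro hxT
      have h0 := hnc x hxT
      rw [dist_self] at h0
      nlinarith
    have hP' : P (insert x T₀) := by
      constructor
      · intro y hy
        rcases Finset.mem_coe.mp hy |> Finset.mem_insert.mp with rfl | hy'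
        · exact hx
        · exact hT₀.1 (Finset.mem_coe.mpr hy')
      · intro y hy z hz hyz
        rcases Finset.mem_insert.mp hy with rfl | hy' <;>
          rcases Finset.mem_insert.mp hz with rfl | hz'
        · exact absurd rfl hyz
        · exact le_of_lt (hnc z hz')
        · rw [dist_comm]; exact le_of_lt (hnc y hy')
        · exact hT₀.2 y hy' z hz' hyz
    have : (insert x T₀).card ∈ cards := ⟨_, hP', rfl⟩
    have hle := le_csSup hbdd this
    rw [Finset.card_insert_of_notMem hxT, hcard₀] at hle
    omega
  -- conclude
  have hμ : μ S ≤ ∑ t ∈ T₀, μ (closedBall t (6 * ε * r)) :=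
    le_trans (measure_mono hcover) (measure_biUnion_finset_le _ _)
  have hball : ∀ t, μ (closedBall t (6 * ε * r)) ≤ ENNReal.ofReal (A * ω * (6 * ε * r) ^ mm) := by
    intro t
    apply hub
    · positivity
    · nlinarith
  calc μ S ≤ ∑ t ∈ T₀, μ (closedBall t (6 * ε * r)) := hμ
    _ ≤ ∑ _t ∈ T₀, ENNReal.ofReal (A * ω * (6 * ε * r) ^ mm) :=
        Finset.sum_le_sum (fun t _ => hball t)
    _ = (T₀.card : ℝ≥0∞) * ENNReal.ofReal (A * ω * (6 * ε * r) ^ mm) := by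
        rw [Finset.sum_const, nsmul_eq_mul]
    _ ≤ ENNReal.ofReal ((2 / ε) ^ m') * ENNReal.ofReal (A * ω * (6 * ε * r) ^ mm) := by
        apply mul_le_mul_left
        rw [← ENNReal.ofReal_natCast]
        exact ENNReal.ofReal_le_ofReal (key T₀ hT₀.1 hT₀.2)
    _ = ENNReal.ofReal ((2 / ε) ^ m' * (A * ω * (6 * ε * r) ^ mm)) :=
        (ENNReal.ofReal_mul (by positivity)).symm

lemma mem_span_iio_iff {m : ℕ} (w : Fin m → H) (k : Fin m) (p : H) :
    p ∈ Submodule.span ℝ (w '' Set.Iio k)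
      ↔ ∃ c : Fin m → ℝ, p = ∑ i ∈ Finset.Iio k, c i • w i := by
  classical
  constructor
  · intro hp
    rw [show w '' Set.Iio k = Set.range (fun i : Set.Iio k => w i) by
      rw [Set.image_eq_range]] at hp
    obtain ⟨c, hc⟩ := (Submodule.mem_span_range_iff_exists_fun ℝ).mp hp
    refine ⟨fun i => if h : i < k then c ⟨i, h⟩ else 0, ?_⟩
    rw [← hc]
    rw [Finset.sum_subtype (p := fun x => x ∈ Set.Iio k) (Finset.Iio k)
      (fun x => by simp [Finset.mem_Iio, Set.mem_Iio])
      (fun i => (if h : i < k then c ⟨i, h⟩ else 0) • w i)]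
    apply Finset.sum_congr rfl
    rintro ⟨i, hi⟩ -
    rw [dif_pos (show i < k from hi)]
  · rintro ⟨c, rfl⟩
    apply Submodule.sum_mem
    intro i hi
    exact Submodule.smul_mem _ _ (Submodule.subset_span
      ⟨i, Finset.mem_Iio.mp hi, rfl⟩)


theorem stmt7 (n m : ℕ) (hm : 1 ≤ m) (hmn : m < n) (A : ℝ) (hA : 1 ≤ A) :
    ∃ δ σ : ℝ, 0 < δ ∧ δ ≤ 1 ∧ 0 < σ ∧ σ ≤ 1 ∧
      ∀ (μ : Measure (EuclideanSpace ℝ (Fin n))), IsLocallyFiniteMeasure μ →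
      ∀ (a : EuclideanSpace ℝ (Fin n)) (r₀ : ℝ), 0 < r₀ →
        (∀ r : ℝ, 0 < r → r ≤ r₀ →
          ENNReal.ofReal (A⁻¹ * omegaBall m * r ^ m) ≤ μ (closedBall a r)) →
        (∀ (z : EuclideanSpace ℝ (Fin n)) (r : ℝ), 0 < r → r ≤ r₀ →
          μ (closedBall z r) ≤ ENNReal.ofReal (A * omegaBall m * r ^ m)) →
        ∀ r : ℝ, 0 < r → r ≤ r₀ →
          ENNReal.ofReal σ * μ (closedBall a r) ^ m
            ≤ Measure.pi (fun _ : Fin m => μ) (Xfat m δ a r) := by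
  classical
  obtain ⟨m', rfl⟩ : ∃ m', m = m' + 1 := ⟨m - 1, by omega⟩
  set D : ℝ := 2 * (m' + 1 : ℝ) * A ^ 2 * 6 ^ (m' + 1) * 2 ^ m' with hD
  have hDbig : 12 ≤ D := by
    have h1 : (1:ℝ) ≤ A ^ 2 := one_le_pow₀ hA
    have h2 : (6:ℝ) ≤ 6 ^ (m' + 1) := le_self_pow₀ (by norm_num) (by omega)
    have h3 : (1:ℝ) ≤ 2 ^ m' := one_le_pow₀ (by norm_num)
    have h4 : (2:ℝ) ≤ 2 * (m' + 1 : ℝ) := by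
      have : (0:ℝ) ≤ (m' : ℝ) := Nat.cast_nonneg m'
      linarith
    calc (12:ℝ) = 2 * 1 * 6 * 1 := by norm_num
      _ ≤ 2 * (m' + 1 : ℝ) * A ^ 2 * 6 ^ (m' + 1) * 2 ^ m' := by gcongr <;> linarith
  have hDpos : 0 < D := by linarith
  set ε : ℝ := D⁻¹ with hε
  have hεpos : 0 < ε := by positivity
  have hε6 : 6 * ε ≤ 1 := by
    have h := (div_le_one hDpos).mpr (by linarith : (6:ℝ) ≤ D)
    rw [div_eq_mul_inv] at h
    exact h
  have hε1 : ε ≤ 1 := by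
    have h := (div_le_one hDpos).mpr (by linarith : (1:ℝ) ≤ D)
    rw [div_eq_mul_inv, one_mul] at h
    exact h
  refine ⟨ε ^ (m' + 1), 1 / 2, by positivity, ?_, by norm_num, by norm_num, ?_⟩
  · exact pow_le_one₀ hεpos.le hε1
  intro μ hμloc a r₀ hr₀ hlb hub r hr hrr₀
  haveI := hμloc
  haveI : SigmaFinite μ := inferInstance
  set ω := omegaBall (m' + 1) with hω
  set good : Set (Fin (m' + 1) → EuclideanSpace ℝ (Fin n)) :=
    {b | (∀ i, b i ∈ closedBall a r) ∧ ∀ k, ∀ p ∈ Submodule.span ℝ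
      ((fun i => b i - a) '' Set.Iio k), ε * r ≤ ‖b k - a - p‖} with hgood
  set bad : Fin (m' + 1) → Set (Fin (m' + 1) → EuclideanSpace ℝ (Fin n)) := fun k =>
    {b | (∀ i, b i ∈ closedBall a r) ∧ ∃ p ∈ Submodule.span ℝ
      ((fun i => b i - a) '' Set.Iio k), ‖b k - a - p‖ < ε * r} with hbad
  -- good tuples are in the fat simplex set
  have hgoodX : good ⊆ Xfat (m' + 1) (ε ^ (m' + 1)) a r := by
    rintro b ⟨hb1, hb2⟩
    refine ⟨hb1, ?_⟩
    have hgs : ∀ k : Fin (m' + 1), ε * r ≤ ‖gramSchmidt ℝ (fun i => b i - a) k‖ := by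
      intro k
      apply norm_gramSchmidt_ge
      intro p hp
      exact hb2 k p hp
    have hprod : (Matrix.of fun i j =>
        (inner ℝ ((fun i => b i - a) i) ((fun i => b i - a) j) : ℝ)).det
        = (∏ k, ‖gramSchmidt ℝ (fun i => b i - a) k‖) ^ 2 := by
      rw [gram_det_eq, Finset.prod_pow]
    rw [wedgeNorm, hprod, Real.sqrt_sq (Finset.prod_nonneg fun k _ => norm_nonneg _)]
    calc ε ^ (m' + 1) * r ^ (m' + 1) = ∏ _k : Fin (m' + 1), (ε * r) := by
          rw [Finset.prod_const, Finset.card_univ, Fintype.card_fin, mul_pow]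
      _ ≤ ∏ k, ‖gramSchmidt ℝ (fun i => b i - a) k‖ :=
          Finset.prod_le_prod (fun k _ => by positivity) (fun k _ => hgs k)
  -- covering of the product of balls
  have hcover : (Set.univ.pi fun _ : Fin (m' + 1) => closedBall a r)
      ⊆ good ∪ ⋃ k, bad k := by
    intro b hb
    have hball : ∀ i, b i ∈ closedBall a r := fun i => hb i (Set.mem_univ i)
    by_cases hg : ∀ k, ∀ p ∈ Submodule.span ℝ ((fun i => b i - a) '' Set.Iio k),
        ε * r ≤ ‖b k - a - p‖
    · exact Or.inl ⟨hball, hg⟩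
    · push_neg at hg
      obtain ⟨k, p, hp, hlt⟩ := hg
      exact Or.inr (Set.mem_iUnion.mpr ⟨k, hball, p, hp, hlt⟩)
  -- measurability of the bad sets
  have hbadmeas : ∀ k, MeasurableSet (bad k) := by
    intro k
    have hrepr : bad k = {b : Fin (m' + 1) → EuclideanSpace ℝ (Fin n) |
          ∀ i, b i ∈ closedBall a r}
        ∩ {b : Fin (m' + 1) → EuclideanSpace ℝ (Fin n) | ∃ p ∈ Submodule.span ℝ
          ((fun i => b i - a) '' Set.Iio k), ‖b k - a - p‖ < ε * r} := rfl
    rw [hrepr]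
    have h1 : IsClosed {b : Fin (m' + 1) → EuclideanSpace ℝ (Fin n) |
        ∀ i, b i ∈ closedBall a r} := by
      have : {b : Fin (m' + 1) → EuclideanSpace ℝ (Fin n) | ∀ i, b i ∈ closedBall a r}
          = Set.univ.pi (fun _ => closedBall a r) := by
        ext b; simp [Set.mem_univ_pi]
      rw [this]
      exact isClosed_set_pi (fun i _ => isClosed_closedBall)
    have h2 : IsOpen {b : Fin (m' + 1) → EuclideanSpace ℝ (Fin n) | ∃ p ∈ Submodule.span ℝ
        ((fun i => b i - a) '' Set.Iio k), ‖b k - a - p‖ < ε * r} := by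
      have heq : {b : Fin (m' + 1) → EuclideanSpace ℝ (Fin n) | ∃ p ∈ Submodule.span ℝ
            ((fun i => b i - a) '' Set.Iio k), ‖b k - a - p‖ < ε * r}
          = ⋃ c : Fin (m' + 1) → ℝ, {b : Fin (m' + 1) → EuclideanSpace ℝ (Fin n) |
            ‖b k - a - ∑ i ∈ Finset.Iio k, c i • (b i - a)‖ < ε * r} := by
        ext b
        simp only [Set.mem_setOf_eq, Set.mem_iUnion]
        constructor
        · rintro ⟨p, hp, hlt⟩
          obtain ⟨c, rfl⟩ := (mem_span_iio_iff _ k p).mp hp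
          exact ⟨c, hlt⟩
        · rintro ⟨c, hlt⟩
          exact ⟨_, (mem_span_iio_iff _ k _).mpr ⟨c, rfl⟩, hlt⟩
      rw [heq]
      apply isOpen_iUnion
      intro c
      apply isOpen_lt ?_ continuous_const
      have hc : Continuous fun b : Fin (m' + 1) → EuclideanSpace ℝ (Fin n) =>
          b k - a - ∑ i ∈ Finset.Iio k, c i • (b i - a) := by
        apply Continuous.sub
        · exact (continuous_apply k).sub continuous_const
        · exact continuous_finset_sum _ fun i _ =>
            ((continuous_apply i).sub continuous_const).const_smul (c i)
      exact hc.norm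
    exact h1.measurableSet.inter h2.measurableSet
  -- measure of each bad set
  have hbadle : ∀ k, Measure.pi (fun _ : Fin (m' + 1) => μ) (bad k)
      ≤ ENNReal.ofReal (1 / (2 * (m' + 1 : ℝ))) * μ (closedBall a r) ^ (m' + 1) := by
    intro k
    set e := MeasurableEquiv.piFinSuccAbove
      (fun _ : Fin (m' + 1) => EuclideanSpace ℝ (Fin n)) k with he
    have hmp := measurePreserving_piFinSuccAbove (fun _ : Fin (m' + 1) => μ) k
    set s := e.symm ⁻¹' (bad k) with hs
    have hsm : MeasurableSet s := e.symm.measurable (hbadmeas k)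
    have hpre : e ⁻¹' s = bad k := by
      rw [hs, ← Set.preimage_comp]
      simp
    have h1 : Measure.pi (fun _ : Fin (m' + 1) => μ) (bad k)
        = (μ.prod (Measure.pi fun _ : Fin m' => μ)) s := by
      rw [← hpre]
      exact hmp.measure_preimage hsm.nullMeasurableSet
    set SB := ENNReal.ofReal ((2 / ε) ^ m' * (A * ω * (6 * ε * r) ^ (m' + 1))) with hSB
    have hbsymm : ∀ (x : EuclideanSpace ℝ (Fin n)) (y : Fin m' → EuclideanSpace ℝ (Fin n)),
        e.symm (x, y) = k.insertNth x y := by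
      intro x y
      rfl
    have hfib : ∀ y : Fin m' → EuclideanSpace ℝ (Fin n),
        μ ((fun x => (x, y)) ⁻¹' s)
          ≤ (Set.univ.pi fun _ : Fin m' => closedBall a r).indicator (fun _ => SB) y := by
      intro y
      by_cases hy : y ∈ (Set.univ.pi fun _ : Fin m' => closedBall a r)
      · rw [Set.indicator_of_mem hy]
        set V := Submodule.span ℝ (Set.range fun j : Fin m' => y j - a) with hV
        have hVfr : Module.finrank ℝ V ≤ m' := by
          have h := finrank_range_le_card (R := ℝ) (fun j : Fin m' => y j - a)
          simpa [Set.finrank, Fintype.card_fin] using h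
        have hsub : ((fun x => (x, y)) ⁻¹' s)
            ⊆ {x | x ∈ closedBall a r ∧ ∃ p ∈ V, ‖x - a - p‖ < ε * r} := by
          intro x hx
          rw [Set.mem_preimage, hs, Set.mem_preimage, hbsymm] at hx
          set b' : Fin (m' + 1) → EuclideanSpace ℝ (Fin n) := k.insertNth x y with hb'
          obtain ⟨hball, p, hp, hlt⟩ := hx
          have hxk : b' k = x := by simp [hb']
          have hxball : x ∈ closedBall a r := by
            have := hball k
            rwa [hxk] at this
          have hspan : Submodule.span ℝ
              ((fun i => b' i - a) '' Set.Iio k) ≤ V := by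
            rw [Submodule.span_le]
            rintro z ⟨i, hik, rfl⟩
            have hik' : i ≠ k := ne_of_lt hik
            obtain ⟨j, hj⟩ := Fin.exists_succAbove_eq hik'
            have hbi : b' i = y j := by
              subst hj
              simp [hb']
            simp only [hbi]
            exact Submodule.subset_span ⟨j, rfl⟩
          rw [hxk] at hlt
          exact ⟨hxball, p, hspan hp, hlt⟩
        calc μ ((fun x => (x, y)) ⁻¹' s)
            ≤ μ {x | x ∈ closedBall a r ∧ ∃ p ∈ V, ‖x - a - p‖ < ε * r} :=
              measure_mono hsub
          _ ≤ SB := slab_bound μ (m' + 1) m'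
              (fun z r' hr' hr'r₀ => hub z r' hr' hr'r₀) hεpos hε6 hr hrr₀ a V hVfr
      · rw [Set.indicator_of_notMem hy]
        obtain ⟨j, hj⟩ : ∃ j, y j ∉ closedBall a r := by
          by_contra hc
          push_neg at hc
          exact hy (fun j _ => hc j)
        have hempty : ((fun x => (x, y)) ⁻¹' s) = ∅ := by
          ext x
          simp only [Set.mem_preimage, Set.mem_empty_iff_false, iff_false]
          intro hx
          rw [hs, Set.mem_preimage, hbsymm] at hx
          have := hx.1 (k.succAbove j)
          rw [Fin.insertNth_apply_succAbove] at this
          exact hj this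
        rw [hempty, measure_empty]
    have h2 : (μ.prod (Measure.pi fun _ : Fin m' => μ)) s
        = ∫⁻ y, μ ((fun x => (x, y)) ⁻¹' s) ∂(Measure.pi fun _ : Fin m' => μ) :=
      Measure.prod_apply_symm hsm
    have h3 : ∫⁻ y, μ ((fun x => (x, y)) ⁻¹' s) ∂(Measure.pi fun _ : Fin m' => μ)
        ≤ SB * μ (closedBall a r) ^ m' := by
      calc ∫⁻ y, μ ((fun x => (x, y)) ⁻¹' s) ∂(Measure.pi fun _ : Fin m' => μ)
          ≤ ∫⁻ y, (Set.univ.pi fun _ : Fin m' => closedBall a r).indicator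
              (fun _ => SB) y ∂(Measure.pi fun _ : Fin m' => μ) := lintegral_mono hfib
        _ = SB * (Measure.pi fun _ : Fin m' => μ)
              (Set.univ.pi fun _ : Fin m' => closedBall a r) :=
            lintegral_indicator_const
              (MeasurableSet.univ_pi fun _ => measurableSet_closedBall) SB
        _ = SB * μ (closedBall a r) ^ m' := by
            rw [Measure.pi_pi, Finset.prod_const, Finset.card_univ, Fintype.card_fin]
    have hSBle : SB ≤ ENNReal.ofReal (1 / (2 * (m' + 1 : ℝ))) * μ (closedBall a r) := by
      have hA0 : A ≠ 0 := by linarith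
      have hm10 : (m' + 1 : ℝ) ≠ 0 := by positivity
      have hD0 : D ≠ 0 := hDpos.ne'
      have hvalue : (2 / ε) ^ m' * (A * ω * (6 * ε * r) ^ (m' + 1))
          = (1 / (2 * (m' + 1 : ℝ))) * (A⁻¹ * ω * r ^ (m' + 1)) := by
        rw [hε, div_inv_eq_mul]
        have e1 : (6 * D⁻¹ * r) ^ (m' + 1)
            = 6 ^ (m' + 1) * (D⁻¹) ^ (m' + 1) * r ^ (m' + 1) := by
          rw [mul_pow, mul_pow]
        have e2 : (2 * D) ^ m' = 2 ^ m' * D ^ m' := by rw [mul_pow]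
        rw [e1, e2, inv_pow, pow_succ D m']
        field_simp
        rw [hD]
        ring
      rw [hSB, hvalue, ENNReal.ofReal_mul (by positivity)]
      exact mul_le_mul_right (hlb r hr hrr₀) _
    calc Measure.pi (fun _ : Fin (m' + 1) => μ) (bad k)
        = (μ.prod (Measure.pi fun _ : Fin m' => μ)) s := h1
      _ = ∫⁻ y, μ ((fun x => (x, y)) ⁻¹' s) ∂(Measure.pi fun _ : Fin m' => μ) := h2
      _ ≤ SB * μ (closedBall a r) ^ m' := h3
      _ ≤ (ENNReal.ofReal (1 / (2 * (m' + 1 : ℝ))) * μ (closedBall a r))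
            * μ (closedBall a r) ^ m' := mul_le_mul_left hSBle _
      _ = ENNReal.ofReal (1 / (2 * (m' + 1 : ℝ))) * μ (closedBall a r) ^ (m' + 1) := by
          rw [mul_assoc, ← pow_succ']
  -- putting things together
  set X := μ (closedBall a r) with hX
  have hXfin : X ^ (m' + 1) ≠ ⊤ := by
    have hXlt : X < ⊤ :=
      lt_of_le_of_lt (hub a r hr hrr₀) ENNReal.ofReal_lt_top
    exact (ENNReal.pow_lt_top hXlt).ne
  have hpiBs : Measure.pi (fun _ : Fin (m' + 1) => μ)
      (Set.univ.pi fun _ => closedBall a r) = X ^ (m' + 1) := by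
    rw [Measure.pi_pi, Finset.prod_const, Finset.card_univ, Fintype.card_fin]
  have hcount : ((m' + 1 : ℕ) : ℝ≥0∞) * ENNReal.ofReal (1 / (2 * (m' + 1 : ℝ)))
      = ENNReal.ofReal (1 / 2) := by
    rw [show ((m' + 1 : ℕ) : ℝ≥0∞) = ENNReal.ofReal ((m' + 1 : ℕ) : ℝ) by
        rw [ENNReal.ofReal_natCast],
      ← ENNReal.ofReal_mul (by positivity)]
    congr 1
    have hm10 : (m' + 1 : ℝ) ≠ 0 := by positivity
    push_cast
    field_simp
  have hunion : X ^ (m' + 1) ≤ Measure.pi (fun _ : Fin (m' + 1) => μ) good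
      + ENNReal.ofReal (1 / 2) * X ^ (m' + 1) := by
    calc X ^ (m' + 1)
        = Measure.pi (fun _ : Fin (m' + 1) => μ)
            (Set.univ.pi fun _ => closedBall a r) := hpiBs.symm
      _ ≤ Measure.pi (fun _ : Fin (m' + 1) => μ) (good ∪ ⋃ k, bad k) :=
          measure_mono hcover
      _ ≤ Measure.pi (fun _ : Fin (m' + 1) => μ) good
            + Measure.pi (fun _ : Fin (m' + 1) => μ) (⋃ k, bad k) := measure_union_le _ _
      _ ≤ Measure.pi (fun _ : Fin (m' + 1) => μ) good
            + ∑ k, Measure.pi (fun _ : Fin (m' + 1) => μ) (bad k) := by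
          gcongr
          calc Measure.pi (fun _ : Fin (m' + 1) => μ) (⋃ k, bad k)
              ≤ ∑' k, Measure.pi (fun _ : Fin (m' + 1) => μ) (bad k) := measure_iUnion_le _
            _ = ∑ k, Measure.pi (fun _ : Fin (m' + 1) => μ) (bad k) := tsum_fintype _
      _ ≤ Measure.pi (fun _ : Fin (m' + 1) => μ) good
            + ∑ _k : Fin (m' + 1),
              ENNReal.ofReal (1 / (2 * (m' + 1 : ℝ))) * X ^ (m' + 1) := by
          gcongr with k
          exact hbadle k
      _ = Measure.pi (fun _ : Fin (m' + 1) => μ) good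
            + ENNReal.ofReal (1 / 2) * X ^ (m' + 1) := by
          rw [Finset.sum_const, Finset.card_univ, Fintype.card_fin, nsmul_eq_mul,
            ← mul_assoc, hcount]
  have hhalf : ENNReal.ofReal (1 / 2) * X ^ (m' + 1)
      ≤ Measure.pi (fun _ : Fin (m' + 1) => μ) good := by
    have hid : X ^ (m' + 1) = ENNReal.ofReal (1 / 2) * X ^ (m' + 1)
        + ENNReal.ofReal (1 / 2) * X ^ (m' + 1) := by
      rw [← add_mul, ← ENNReal.ofReal_add (by norm_num) (by norm_num)]
      norm_num
    nth_rewrite 1 [hid] at hunion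
    exact (ENNReal.add_le_add_iff_right
      (ENNReal.mul_ne_top ENNReal.ofReal_ne_top hXfin)).mp hunion
  exact le_trans hhalf (measure_mono hgoodX)
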